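/- Let P, Q_1, …, Q_m be probability distributions on finite alphabets. Then H(P‖Q_1,…,Q_m) ≥ max{ [H(P) − ∑_{i=1}^m H(Q_i)]_+ , −log(∑_{j=1}^K p_{(j)}) }, where K := ∏_{i=1}^m |supp(Q_i)|, p_{(1)} ≥ p_{(2)} ≥ ⋯ are the probability masses of P arranged in nonincreasing order, H(·) denotes Shannon entropy, and [t]_+ = max{t, 0}. -/

import Mathlib

open scoped Classical BigOperators

noncomputable section

/-- `P` is a probability distribution on the finite type `α`. -/
def IsProbDist {α : Type*} [Fintype α] (P : α → ℝ) : Prop :=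
  (∀ x, 0 ≤ P x) ∧ ∑ x, P x = 1

/-- Shannon conditional entropy `H(X | Y)` of a joint pmf `π`
(first coordinate `X`, second coordinate `Y`), with the convention `0 log 0 = 0`. -/
def condEnt {α β : Type*} [Fintype α] [Fintype β] (π : α → β → ℝ) : ℝ :=
  - ∑ y : β, ∑ x : α, π x y * Real.log (π x y / ∑ x' : α, π x' y)

/-- `π` is a joint distribution of `(X, (Y_i)_{i : ι})` with `X ∼ P` and `Y_i ∼ Q i`. -/
def IsCouplingList {α ι : Type*} {β : ι → Type*} [Fintype α] [Fintype ι]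
    [∀ i, Fintype (β i)] (π : α → ((i : ι) → β i) → ℝ)
    (P : α → ℝ) (Q : (i : ι) → β i → ℝ) : Prop :=
  (∀ x y, 0 ≤ π x y) ∧ (∀ x, ∑ y, π x y = P x) ∧
    (∀ i b, (∑ x, ∑ y, if y i = b then π x y else 0) = Q i b)

/-- Minimum list entropy coupling `H(P ‖ Q_1, …, Q_m)`: the infimum of the
conditional entropy `H(X | Y_1, …, Y_m)` over all couplings with `X ∼ P`, `Y_i ∼ Q i`. -/
def Hlist {α ι : Type*} {β : ι → Type*} [Fintype α] [Fintype ι] [∀ i, Fintype (β i)]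
    (P : α → ℝ) (Q : (i : ι) → β i → ℝ) : ℝ :=
  sInf {h | ∃ π : α → ((i : ι) → β i) → ℝ, IsCouplingList π P Q ∧ condEnt π = h}

/-- Homogeneous minimum list entropy coupling `H_m(P ‖ Q)`. -/
def Hm {α β : Type*} [Fintype α] [Fintype β] (m : ℕ) (P : α → ℝ) (Q : β → ℝ) : ℝ :=
  Hlist (β := fun _ : Fin m => β) P (fun _ => Q)

/-- Shannon entropy of a distribution, with the convention `0 log 0 = 0`. -/
def ent {α : Type*} [Fintype α] (P : α → ℝ) : ℝ := - ∑ x, P x * Real.log (P x)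

/-- Gibbs' inequality. -/
lemma gibbs {γ : Type*} [Fintype γ] (p q : γ → ℝ) (hp : ∀ x, 0 ≤ p x)
    (hq : ∀ x, 0 ≤ q x) (hp1 : ∑ x, p x = 1) (hq1 : ∑ x, q x ≤ 1)
    (hsupp : ∀ x, q x = 0 → p x = 0) :
    - ∑ x, p x * Real.log (p x) ≤ - ∑ x, p x * Real.log (q x) := by
  have key : ∀ x, p x * (Real.log (q x) - Real.log (p x)) ≤ q x - p x := by
    intro x
    rcases eq_or_lt_of_le (hp x) with h | h
    · simp [← h, hq x]
    · have hqx : 0 < q x := lt_of_le_of_ne (hq x) (fun h0 => by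
        have := hsupp x h0.symm; linarith)
      have hlog : Real.log (q x / p x) ≤ q x / p x - 1 :=
        Real.log_le_sub_one_of_pos (div_pos hqx h)
      rw [Real.log_div (ne_of_gt hqx) (ne_of_gt h)] at hlog
      calc p x * (Real.log (q x) - Real.log (p x)) ≤ p x * (q x / p x - 1) := by
            exact mul_le_mul_of_nonneg_left hlog (le_of_lt h)
        _ = q x - p x := by field_simp
  have : ∑ x, p x * (Real.log (q x) - Real.log (p x)) ≤ ∑ x, (q x - p x) :=
    Finset.sum_le_sum (fun x _ => key x)
  rw [Finset.sum_sub_distrib, hp1] at this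
  have h2 : ∑ x, p x * (Real.log (q x) - Real.log (p x)) ≤ 0 := by linarith
  have h3 : ∑ x, p x * (Real.log (q x) - Real.log (p x))
      = ∑ x, p x * Real.log (q x) - ∑ x, p x * Real.log (p x) := by
    rw [← Finset.sum_sub_distrib]; congr 1; ext x; ring
  linarith [h3 ▸ h2]



lemma le_marg {α β : Type*} [Fintype α] [Fintype β] (π : α → β → ℝ)
    (hpos : ∀ x y, 0 ≤ π x y) (x : α) (y : β) : π x y ≤ ∑ x', π x' y :=
  Finset.single_le_sum (fun x' _ => hpos x' y) (Finset.mem_univ x)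

/-- `condEnt π = H(X,Y) - H(Y)`. -/
lemma condEnt_eq {α β : Type*} [Fintype α] [Fintype β] (π : α → β → ℝ)
    (hpos : ∀ x y, 0 ≤ π x y) :
    condEnt π = (- ∑ y, ∑ x, π x y * Real.log (π x y))
      - (- ∑ y, (∑ x, π x y) * Real.log (∑ x, π x y)) := by
  unfold condEnt
  have key : ∀ y, ∑ x, π x y * Real.log (π x y / ∑ x', π x' y)
      = (∑ x, π x y * Real.log (π x y)) - (∑ x, π x y) * Real.log (∑ x, π x y) := by
    intro y
    rw [Finset.sum_mul, ← Finset.sum_sub_distrib]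
    congr 1; ext x
    rcases eq_or_lt_of_le (hpos x y) with h | h
    · simp [← h]
    · have hpy : 0 < ∑ x', π x' y := lt_of_lt_of_le h (le_marg π hpos x y)
      rw [Real.log_div (ne_of_gt h) (ne_of_gt hpy)]; ring
  simp only [key]
  rw [Finset.sum_sub_distrib]
  ring

lemma condEnt_nonneg {α β : Type*} [Fintype α] [Fintype β] (π : α → β → ℝ)
    (hpos : ∀ x y, 0 ≤ π x y) : 0 ≤ condEnt π := by
  unfold condEnt
  rw [neg_nonneg]
  apply Finset.sum_nonpos; intro y _
  apply Finset.sum_nonpos; intro x _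
  rcases eq_or_lt_of_le (hpos x y) with h | h
  · simp [← h]
  · have hpy : 0 < ∑ x', π x' y := lt_of_lt_of_le h (le_marg π hpos x y)
    apply mul_nonpos_of_nonneg_of_nonpos (le_of_lt h)
    apply Real.log_nonpos (by positivity)
    rw [div_le_one hpy]; exact le_marg π hpos x y

/-- Part (a): `H(P) - ∑ H(Q i) ≤ condEnt π`. -/
lemma partA {α ι : Type*} {β : ι → Type*} [Fintype α] [Fintype ι]
    [∀ i, Fintype (β i)] (π : α → ((i : ι) → β i) → ℝ)
    (P : α → ℝ) (Q : (i : ι) → β i → ℝ) (hc : IsCouplingList π P Q)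
    (hP : IsProbDist P) (hQ : ∀ i, IsProbDist (Q i)) :
    ent P - ∑ i, ent (Q i) ≤ condEnt π := by
  obtain ⟨hpos, hmargX, hmargY⟩ := hc
  set pY : ((i : ι) → β i) → ℝ := fun y => ∑ x, π x y with hpY
  -- marginal bound : pY y ≤ Q i (y i)
  have hQmarg : ∀ (i : ι) (y : (i : ι) → β i), pY y ≤ Q i (y i) := by
    intro i y
    rw [← hmargY i (y i)]
    calc pY y = ∑ x, π x y := rfl
      _ ≤ ∑ x, ∑ y', (if y' i = y i then π x y' else 0) := by
          apply Finset.sum_le_sum; intro x _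
          have : π x y = (if y i = y i then π x y else 0) := by simp
          rw [this]
          exact Finset.single_le_sum (f := fun y' => if y' i = y i then π x y' else 0)
            (fun y' _ => by by_cases h : y' i = y i <;> simp [h, hpos]) (Finset.mem_univ y)
  have hpYnn : ∀ y, 0 ≤ pY y := fun y => Finset.sum_nonneg (fun x _ => hpos x y)
  have hpY1 : ∑ y, pY y = 1 := by
    rw [hpY]; rw [Finset.sum_comm]
    simp only [hmargX]; exact hP.2
  rw [condEnt_eq π hpos]
  -- (i) ent P ≤ joint entropy
  have hi : ent P ≤ - ∑ y, ∑ x, π x y * Real.log (π x y) := by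
    have step : ∀ y x, - (π x y * Real.log (P x)) ≤ - (π x y * Real.log (π x y)) := by
      intro y x
      rcases eq_or_lt_of_le (hpos x y) with h | h
      · simp [← h]
      · have hPx : π x y ≤ P x := by
          rw [← hmargX x]
          exact Finset.single_le_sum (fun y' _ => hpos x y') (Finset.mem_univ y)
        have hPxpos : 0 < P x := lt_of_lt_of_le h hPx
        have := Real.log_le_log (by exact h) hPx
        nlinarith [Real.log_le_log h hPx]
    calc ent P = - ∑ x, P x * Real.log (P x) := rfl
      _ = - ∑ x, (∑ y, π x y) * Real.log (P x) := by simp only [hmargX]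
      _ = ∑ x, ∑ y, - (π x y * Real.log (P x)) := by
          rw [← Finset.sum_neg_distrib]
          congr 1; ext x; rw [Finset.sum_mul, Finset.sum_neg_distrib]
      _ ≤ ∑ x, ∑ y, - (π x y * Real.log (π x y)) :=
          Finset.sum_le_sum (fun x _ => Finset.sum_le_sum (fun y _ => step y x))
      _ = - ∑ y, ∑ x, π x y * Real.log (π x y) := by
          rw [Finset.sum_comm]; simp [Finset.sum_neg_distrib]
  -- (ii) ent pY ≤ ∑ i, ent (Q i)
  have hii : (- ∑ y, pY y * Real.log (pY y)) ≤ ∑ i, ent (Q i) := by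
    set q : ((i : ι) → β i) → ℝ := fun y => ∏ i, Q i (y i) with hq
    have hqnn : ∀ y, 0 ≤ q y := fun y => Finset.prod_nonneg (fun i _ => (hQ i).1 (y i))
    have hq1 : ∑ y, q y = 1 := by
      have := Finset.prod_univ_sum (fun i : ι => (Finset.univ : Finset (β i)))
        (fun i b => Q i b)
      rw [Fintype.piFinset_univ] at this
      rw [hq, ← this]
      exact Finset.prod_eq_one (fun i _ => (hQ i).2)
    have hsupp : ∀ y, q y = 0 → pY y = 0 := by
      intro y h0
      by_contra hne
      have hpy : 0 < pY y := lt_of_le_of_ne (hpYnn y) (Ne.symm hne)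
      have : 0 < q y := Finset.prod_pos (fun i _ => lt_of_lt_of_le hpy (hQmarg i y))
      linarith
    have hg := gibbs pY q hpYnn hqnn hpY1 (le_of_eq hq1) hsupp
    refine le_trans hg (le_of_eq ?_)
    have step1 : ∀ y, pY y * Real.log (q y) = ∑ i, pY y * Real.log (Q i (y i)) := by
      intro y
      rcases eq_or_lt_of_le (hpYnn y) with h | h
      · simp [← h]
      · rw [hq, Real.log_prod (fun i _ =>
          ne_of_gt (lt_of_lt_of_le h (hQmarg i y))), Finset.mul_sum]
    have step2 : ∀ i, ∑ y, pY y * Real.log (Q i (y i)) = ∑ b, Q i b * Real.log (Q i b) := by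
      intro i
      have inner : ∀ y : (i : ι) → β i,
          pY y * Real.log (Q i (y i)) = ∑ b, if y i = b then pY y * Real.log (Q i b) else 0 := by
        intro y
        rw [Finset.sum_ite_eq]
        simp
      simp only [inner]
      rw [Finset.sum_comm]
      congr 1; ext b
      have : ∀ y : (i : ι) → β i, (if y i = b then pY y * Real.log (Q i b) else 0)
          = (if y i = b then pY y else 0) * Real.log (Q i b) := by
        intro y; split <;> simp
      simp only [this]
      rw [← Finset.sum_mul]
      congr 1
      rw [← hmargY i b, Finset.sum_comm]
      congr 1; ext y
      rw [hpY]
      split <;> simp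
    calc - ∑ y, pY y * Real.log (q y) = - ∑ y, ∑ i, pY y * Real.log (Q i (y i)) := by
          simp only [step1]
      _ = - ∑ i, ∑ y, pY y * Real.log (Q i (y i)) := by rw [Finset.sum_comm]
      _ = ∑ i, ent (Q i) := by
          rw [← Finset.sum_neg_distrib]
          exact Finset.sum_congr rfl (fun i _ => by rw [step2 i]; rfl)
  have : - ∑ y, (∑ x, π x y) * Real.log (∑ x, π x y) ≤ ∑ i, ent (Q i) := hii
  linarith


lemma prodQ_sum_one {ι : Type*} {β : ι → Type*} [Fintype ι] [∀ i, Fintype (β i)]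
    (Q : (i : ι) → β i → ℝ) (hQ : ∀ i, IsProbDist (Q i)) :
    ∑ y : (i : ι) → β i, ∏ i, Q i (y i) = 1 := by
  have := Finset.prod_univ_sum (fun i : ι => (Finset.univ : Finset (β i)))
    (fun i b => Q i b)
  rw [Fintype.piFinset_univ] at this
  rw [← this]
  exact Finset.prod_eq_one (fun i _ => (hQ i).2)

lemma exists_coupling {α ι : Type*} {β : ι → Type*} [Fintype α] [Fintype ι]
    [∀ i, Fintype (β i)] (P : α → ℝ) (Q : (i : ι) → β i → ℝ)
    (hP : IsProbDist P) (hQ : ∀ i, IsProbDist (Q i)) :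
    IsCouplingList (fun x y => P x * ∏ i, Q i (y i)) P Q := by
  refine ⟨fun x y => mul_nonneg (hP.1 x) (Finset.prod_nonneg fun i _ => (hQ i).1 (y i)),
    fun x => ?_, fun i b => ?_⟩
  · rw [← Finset.mul_sum, prodQ_sum_one Q hQ, mul_one]
  · set g : (j : ι) → β j → ℝ :=
      Function.update Q i (fun c => if c = b then Q i c else 0) with hg
    have claim1 : ∀ y : (j : ι) → β j,
        ∏ j, g j (y j) = if y i = b then ∏ j, Q j (y j) else 0 := by
      intro y
      by_cases h : y i = b
      · rw [if_pos h]
        refine Finset.prod_congr rfl fun j _ => ?_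
        rcases eq_or_ne j i with rfl | hj
        · simp [hg, Function.update_self, h]
        · simp [hg, Function.update_of_ne hj]
      · rw [if_neg h]
        apply Finset.prod_eq_zero (Finset.mem_univ i)
        simp [hg, Function.update_self, h]
    have claim2 : ∑ y : (j : ι) → β j, ∏ j, g j (y j) = Q i b := by
      have := Finset.prod_univ_sum (fun j : ι => (Finset.univ : Finset (β j)))
        (fun j c => g j c)
      rw [Fintype.piFinset_univ] at this
      rw [← this]
      rw [Finset.prod_eq_single_of_mem i (Finset.mem_univ i)]
      · simp [hg, Function.update_self, Finset.sum_ite_eq' Finset.univ b (Q i)]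
      · intro j _ hj
        simp [hg, Function.update_of_ne hj, (hQ j).2]
    have hrw : ∀ x, ∀ y : (j : ι) → β j,
        (if y i = b then P x * ∏ j, Q j (y j) else 0)
          = P x * ∏ j, g j (y j) := by
      intro x y; rw [claim1]; split <;> simp
    simp only [hrw]
    simp only [← Finset.mul_sum, claim2]
    rw [← Finset.sum_mul, hP.2, one_mul]

lemma coupling_marg {α ι : Type*} {β : ι → Type*} [Fintype α] [Fintype ι]
    [∀ i, Fintype (β i)] {π : α → ((i : ι) → β i) → ℝ}
    {P : α → ℝ} {Q : (i : ι) → β i → ℝ} (hc : IsCouplingList π P Q)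
    (i : ι) (y : (i : ι) → β i) : (∑ x, π x y) ≤ Q i (y i) := by
  obtain ⟨hpos, -, hmargY⟩ := hc
  rw [← hmargY i (y i)]
  apply Finset.sum_le_sum; intro x _
  have h : π x y = (if y i = y i then π x y else 0) := by simp
  rw [h]
  exact Finset.single_le_sum (f := fun y' => if y' i = y i then π x y' else 0)
    (fun y' _ => by by_cases h : y' i = y i <;> simp [h, hpos]) (Finset.mem_univ y)

lemma partB {α ι : Type*} {β : ι → Type*} [Fintype α] [Fintype ι]
    [∀ i, Fintype (β i)] (π : α → ((i : ι) → β i) → ℝ)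
    (P : α → ℝ) (Q : (i : ι) → β i → ℝ) (hc : IsCouplingList π P Q)
    (hP : IsProbDist P) (hQ : ∀ i, IsProbDist (Q i)) :
    -Real.log (sSup {s : ℝ | ∃ A : Finset α,
      A.card ≤ ∏ i, Set.ncard {y : β i | Q i y ≠ 0} ∧ ∑ x ∈ A, P x = s}) ≤ condEnt π := by
  obtain ⟨hpos, hmargX, hmargY⟩ := hc
  set pY : ((i : ι) → β i) → ℝ := fun y => ∑ x, π x y with hpYdef
  have hpYnn : ∀ y, 0 ≤ pY y := fun y => Finset.sum_nonneg (fun x _ => hpos x y)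
  have hpY1 : ∑ y, pY y = 1 := by
    rw [hpYdef, Finset.sum_comm]; simp only [hmargX]; exact hP.2
  -- choose argmax
  have hαne : Nonempty α := by
    rcases isEmpty_or_nonempty α with h | h
    · exfalso; have := hP.2; rw [Finset.univ_eq_empty, Finset.sum_empty] at this; norm_num at this
    · exact h
  have hex : ∀ y, ∃ x, ∀ x', π x' y ≤ π x y := by
    intro y
    obtain ⟨x, -, hx⟩ := Finset.exists_max_image Finset.univ (fun x => π x y)
      Finset.univ_nonempty
    exact ⟨x, fun x' => hx x' (Finset.mem_univ x')⟩
  choose xm hxm using hex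
  set M : ((i : ι) → β i) → ℝ := fun y => π (xm y) y with hMdef
  have hMnn : ∀ y, 0 ≤ M y := fun y => hpos _ y
  have hMle : ∀ y, M y ≤ pY y := fun y =>
    Finset.single_le_sum (fun x _ => hpos x y) (Finset.mem_univ (xm y))
  have hMpos : ∀ y, pY y ≠ 0 → 0 < M y := by
    intro y hy
    by_contra h
    push_neg at h
    have hM0 : M y = 0 := le_antisymm h (hMnn y)
    have : pY y ≤ 0 := by
      rw [hpYdef]
      apply Finset.sum_nonpos; intro x _
      calc π x y ≤ M y := hxm y x
        _ = 0 := hM0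
    exact hy (le_antisymm this (hpYnn y))
  set T : ℝ := ∑ y, M y with hTdef
  have hTpos : 0 < T := by
    have hy0 : ∃ y, pY y ≠ 0 := by
      by_contra h
      push_neg at h
      rw [Finset.sum_congr rfl (fun y _ => h y), Finset.sum_const, smul_zero] at hpY1
      norm_num at hpY1
    obtain ⟨y0, hy0⟩ := hy0
    calc (0:ℝ) < M y0 := hMpos y0 hy0
      _ ≤ T := Finset.single_le_sum (fun y _ => hMnn y) (Finset.mem_univ y0)
  -- Step 1 : condEnt π ≥ - ∑ y, pY y * log (M y / pY y)
  have step1 : - ∑ y, pY y * Real.log (M y / pY y) ≤ condEnt π := by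
    unfold condEnt
    rw [neg_le_neg_iff]
    apply Finset.sum_le_sum; intro y _
    have : pY y * Real.log (M y / pY y) = ∑ x, π x y * Real.log (M y / pY y) := by
      rw [← Finset.sum_mul]
    rw [this]
    apply Finset.sum_le_sum; intro x _
    rcases eq_or_lt_of_le (hpos x y) with h | h
    · simp [← h]
    · have hple : π x y ≤ pY y :=
        Finset.single_le_sum (fun x' _ => hpos x' y) (Finset.mem_univ x)
      have hpy : 0 < pY y := lt_of_lt_of_le h hple
      have hMy : 0 < M y := lt_of_lt_of_le h (hxm y x)
      refine mul_le_mul_of_nonneg_left ?_ (le_of_lt h)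
      apply Real.log_le_log (by positivity)
      gcongr
      exact hxm y x
  -- Step 2 : ∑ y, pY y * log (M y / pY y) ≤ log T
  have step2 : ∑ y, pY y * Real.log (M y / pY y) ≤ Real.log T := by
    have key : ∀ y, pY y * Real.log (M y / pY y)
        ≤ M y / T - pY y + pY y * Real.log T := by
      intro y
      rcases eq_or_ne (pY y) 0 with h | h
      · rw [h]
        simp only [zero_mul, zero_add, sub_zero]
        simpa using div_nonneg (hMnn y) (le_of_lt hTpos)
      · have hpy : 0 < pY y := lt_of_le_of_ne (hpYnn y) (Ne.symm h)
        have hMy : 0 < M y := hMpos y h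
        have h1 : Real.log (M y / (pY y * T)) ≤ M y / (pY y * T) - 1 :=
          Real.log_le_sub_one_of_pos (by positivity)
        have h2 : Real.log (M y / (pY y * T))
            = Real.log (M y) - Real.log (pY y) - Real.log T := by
          rw [Real.log_div (ne_of_gt hMy) (by positivity),
            Real.log_mul (ne_of_gt hpy) (ne_of_gt hTpos)]
          ring
        have h3 : Real.log (M y / pY y) = Real.log (M y) - Real.log (pY y) :=
          Real.log_div (ne_of_gt hMy) (ne_of_gt hpy)
        have h4 : pY y * (M y / (pY y * T) - 1) = M y / T - pY y := by
          field_simp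
        rw [h2] at h1
        rw [h3]
        nlinarith [mul_le_mul_of_nonneg_left h1 (le_of_lt hpy)]
    calc ∑ y, pY y * Real.log (M y / pY y)
        ≤ ∑ y, (M y / T - pY y + pY y * Real.log T) :=
          Finset.sum_le_sum (fun y _ => key y)
      _ = (∑ y, M y) / T - (∑ y, pY y) + (∑ y, pY y) * Real.log T := by
          rw [Finset.sum_add_distrib, Finset.sum_sub_distrib, ← Finset.sum_div,
            ← Finset.sum_mul]
      _ = Real.log T := by
          rw [hpY1, ← hTdef, div_self (ne_of_gt hTpos)]; ring
  -- Step 3 : T ≤ sSup set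
  set S : Set ℝ := {s : ℝ | ∃ A : Finset α,
    A.card ≤ ∏ i, Set.ncard {y : β i | Q i y ≠ 0} ∧ ∑ x ∈ A, P x = s} with hSdef
  set Ys : Finset ((i : ι) → β i) := Finset.univ.filter (fun y => pY y ≠ 0) with hYs
  set A : Finset α := Ys.image xm with hA
  have hTsum : T = ∑ y ∈ Ys, M y := by
    rw [hTdef]
    refine (Finset.sum_subset (Finset.filter_subset _ _) ?_).symm
    intro y _ hy
    simp only [hYs, Finset.mem_filter] at hy
    push_neg at hy
    have hy0 : pY y = 0 := hy (Finset.mem_univ y)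
    exact le_antisymm (hy0 ▸ hMle y) (hMnn y)
  have hTA : T ≤ ∑ x ∈ A, P x := by
    rw [hTsum, ← Finset.sum_fiberwise_of_maps_to
      (fun y hy => Finset.mem_image_of_mem xm hy) (fun y => M y)]
    apply Finset.sum_le_sum; intro x hx
    calc ∑ y ∈ Ys.filter (fun y => xm y = x), M y
        = ∑ y ∈ Ys.filter (fun y => xm y = x), π x y := by
          refine Finset.sum_congr rfl fun y hy => ?_
          rw [Finset.mem_filter] at hy
          simp only [hMdef]; rw [hy.2]
      _ ≤ ∑ y, π x y := Finset.sum_le_sum_of_subset_of_nonneg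
          (Finset.subset_univ _) (fun y _ _ => hpos x y)
      _ = P x := hmargX x
  have hcard : A.card ≤ ∏ i, Set.ncard {y : β i | Q i y ≠ 0} := by
    have h1 : A.card ≤ Ys.card := Finset.card_image_le
    have hsub : Ys ⊆ Fintype.piFinset
        (fun i => Finset.univ.filter (fun b => Q i b ≠ 0)) := by
      intro y hy
      simp only [hYs, Finset.mem_filter] at hy
      rw [Fintype.mem_piFinset]
      intro i
      rw [Finset.mem_filter]
      refine ⟨Finset.mem_univ _, ?_⟩
      have hpy : 0 < pY y := lt_of_le_of_ne (hpYnn y) (Ne.symm hy.2)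
      have := coupling_marg (π := π) (P := P) (Q := Q) ⟨hpos, hmargX, hmargY⟩ i y
      exact ne_of_gt (lt_of_lt_of_le hpy this)
    have h2 : Ys.card ≤ ∏ i, (Finset.univ.filter (fun b => Q i b ≠ 0)).card := by
      rw [← Fintype.card_piFinset]
      exact Finset.card_le_card hsub
    have h3 : ∀ i, (Finset.univ.filter (fun b => Q i b ≠ 0)).card
        = Set.ncard {y : β i | Q i y ≠ 0} := by
      intro i
      rw [Set.ncard_eq_toFinset_card', Set.toFinset_setOf]
    calc A.card ≤ Ys.card := h1
      _ ≤ ∏ i, (Finset.univ.filter (fun b => Q i b ≠ 0)).card := h2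
      _ = ∏ i, Set.ncard {y : β i | Q i y ≠ 0} := Finset.prod_congr rfl (fun i _ => h3 i)
  have hmem : (∑ x ∈ A, P x) ∈ S := ⟨A, hcard, rfl⟩
  have hbdd : BddAbove S := by
    refine ⟨1, fun s hs => ?_⟩
    obtain ⟨B, -, hB⟩ := hs
    rw [← hB, ← hP.2]
    exact Finset.sum_le_sum_of_subset_of_nonneg (Finset.subset_univ _)
      (fun x _ _ => hP.1 x)
  have hTS : T ≤ sSup S := le_trans hTA (le_csSup hbdd hmem)
  have hlog : Real.log T ≤ Real.log (sSup S) := Real.log_le_log hTpos hTS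
  calc -Real.log (sSup S) ≤ -Real.log T := by linarith
    _ ≤ - ∑ y, pY y * Real.log (M y / pY y) := by linarith
    _ ≤ condEnt π := step1


/-- converse lower bound:
`H(P‖Q_1,…,Q_m) ≥ max{ [H(P) − ∑_i H(Q_i)]_+ , −log(∑_{j=1}^K p_(j)) }` where
`K = ∏_i |supp(Q_i)|` and `∑_{j=1}^K p_(j)` is the sum of the `K` largest masses of `P`
(formalized as the supremum of `∑_{x∈A} P(x)` over subsets `A` with `|A| ≤ K`). -/
theorem converse_lower_bound {α : Type*} [Fintype α] {m : ℕ}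
    {Y : Fin m → Type*} [∀ i, Fintype (Y i)]
    (P : α → ℝ) (hP : IsProbDist P)
    (Q : ∀ i, Y i → ℝ) (hQ : ∀ i, IsProbDist (Q i)) :
    max (max (ent P - ∑ i, ent (Q i)) 0)
        (-Real.log (sSup {s : ℝ | ∃ A : Finset α,
          A.card ≤ ∏ i, Set.ncard {y : Y i | Q i y ≠ 0} ∧ ∑ x ∈ A, P x = s}))
      ≤ Hlist P Q := by
  unfold Hlist
  apply le_csInf
  · exact ⟨_, fun x y => P x * ∏ i, Q i (y i), exists_coupling P Q hP hQ, rfl⟩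
  · rintro h ⟨π, hc, rfl⟩
    apply max_le
    · apply max_le
      · exact partA π P Q hc hP hQ
      · exact @condEnt_nonneg α ((i : Fin m) → Y i) _
          (@Pi.instFintype (Fin m) Y (fun a b => Classical.propDecidable (a = b)) _ _) π hc.1
    · exact partB π P Q hc hP hQ


end
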